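/- arXiv:1501.01350 — 3 statements merged into one kernel-verified Lean document; each statement's English description precedes it below -/
import Mathlib

section
/- For every real α with 1 < α < 2 and all integers n, m with 3 ≤ n ≤ m, the finite sum of absolute values of the fractional centred difference coefficients satisfies S(α)·[(α+2n)^{−(2α+1)} − (α+2m+2)^{−(2α+1)}]·(α+4)^{2(α+1)}/(2(2α+1)) < Σ_{k=n}^{m} |g_k^{(α)}| < S(α)·[(α+2n)^{−α} − (α+2m+2)^{−α}]·(α+6)^{α+1}/(2α), where S(α) = −Γ(α+1)/(Γ(α/2−1)·Γ(α/2+3)). -/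
/-!
The functional equation `Γ(s + 1) = s Γ(s)` gives `g_{k+1} = g_k (2k - α) / (α + 2k + 2)` and
`g_2 = -S(α)`. Writing the ratio as `1 - c/x` with `c = 2α + 2`, `x = α + 2k + 2`, the chain
`((x - 2)/x)^c ≤ exp(-2c/x) ≤ 1 - c/x ≤ exp(-c/x) ≤ (x/(x + 2))^(c/2)` (the second step needs
`c ≤ 3x/4`) yields by induction from `k = 2`
`S ((α + 4)/(α + 2k))^(2α + 2) ≤ -g_k ≤ S ((α + 6)/(α + 2k + 2))^(α + 1)`.
Bernoulli's inequality compares each bound with a difference of consecutive values of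
`k ↦ (α + 2k)^(-p)`, and the sums telescope.
-/

open Real

/-- The fractional centred difference coefficients
`g_k^{(α)} = ((−1)^k Γ(α+1)) / (Γ(α/2 − k + 1) Γ(α/2 + k + 1))`. -/
noncomputable def fracCoeff (α : ℝ) (k : ℤ) : ℝ :=
  ((-1 : ℝ) ^ k * Real.Gamma (α + 1)) /
    (Real.Gamma (α / 2 - (k : ℝ) + 1) * Real.Gamma (α / 2 + (k : ℝ) + 1))

/-- `S(α) = −Γ(α+1)/(Γ(α/2−1)·Γ(α/2+3))`. -/
noncomputable def Scoeff (α : ℝ) : ℝ :=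
  -Real.Gamma (α + 1) / (Real.Gamma (α / 2 - 1) * Real.Gamma (α / 2 + 3))

lemma exp_neg_two_mul_le_one_sub {y : ℝ} (hy0 : 0 ≤ y) (hy : y ≤ 3 / 4) :
    exp (-(2 * y)) ≤ 1 - y := by
  -- `(1 - y)(1 + 2y + 2y² + 4y³/3) - 1 = y (3 - 2y² - 4y³) / 3 ≥ 0` for `0 ≤ y ≤ 3/4`
  have h := sum_le_exp_of_nonneg (by positivity : 0 ≤ 2 * y) 4
  simp only [Finset.sum_range_succ, Finset.sum_range_zero, Nat.factorial] at h
  norm_num at h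
  rw [exp_neg, inv_le_iff_one_le_mul₀ (exp_pos _)]
  nlinarith [mul_nonneg hy0 hy0, mul_nonneg (mul_nonneg hy0 hy0) hy0]

lemma one_sub_div_le_rpow {x c d : ℝ} (hx : 0 < x) (hc : 0 ≤ c) (hd : 0 < d) :
    1 - c / x ≤ (x / (x + d)) ^ (c / d) := by
  have hlog : -(d / x) ≤ log (x / (x + d)) := by
    have := one_sub_inv_le_log_of_pos (by positivity : 0 < x / (x + d))
    rw [inv_div] at this
    have e : 1 - (x + d) / x = -(d / x) := by field_simp; ring
    linarith
  calc 1 - c / x ≤ exp (-(c / x)) := one_sub_le_exp_neg _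
    _ ≤ (x / (x + d)) ^ (c / d) := by
      rw [rpow_def_of_pos (by positivity)]
      apply exp_le_exp.mpr
      have := mul_le_mul_of_nonneg_right hlog (div_nonneg hc hd.le)
      have e : -(d / x) * (c / d) = -(c / x) := by field_simp
      linarith

lemma rpow_le_one_sub_div {x c : ℝ} (hx : 0 < x) (hc : 0 ≤ c) (hcx : 4 * c ≤ 3 * (x + 2)) :
    (x / (x + 2)) ^ c ≤ 1 - c / (x + 2) := by
  have hlog : log (x / (x + 2)) ≤ -(2 / (x + 2)) := by
    have := log_le_sub_one_of_pos (by positivity : 0 < x / (x + 2))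
    have e : x / (x + 2) - 1 = -(2 / (x + 2)) := by field_simp; ring
    linarith
  calc (x / (x + 2)) ^ c
      ≤ exp (-(2 * (c / (x + 2)))) := by
        rw [rpow_def_of_pos (by positivity)]
        apply exp_le_exp.mpr
        have := mul_le_mul_of_nonneg_right hlog hc
        have e : -(2 / (x + 2)) * c = -(2 * (c / (x + 2))) := by ring
        linarith
    _ ≤ 1 - c / (x + 2) := exp_neg_two_mul_le_one_sub (by positivity)
      (by rw [div_le_iff₀ (by positivity)]; linarith)

lemma rpow_neg_sub_rpow_neg_lt {a b p : ℝ} (ha : 0 < a) (hab : a < b) (hp : 1 < p) :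
    a ^ (-p) - b ^ (-p) < p * (b - a) * a ^ (-(p + 1)) := by
  have hb : 0 < b := ha.trans hab
  have hbern := one_add_mul_self_lt_rpow_one_add (s := (a - b) / b)
    (by rw [le_div_iff₀ hb]; linarith) (div_ne_zero (by linarith) hb.ne') hp
  rw [show 1 + (a - b) / b = a / b by field_simp; ring, div_rpow ha.le hb.le] at hbern
  have hA := rpow_pos_of_pos ha p
  have hB := rpow_pos_of_pos hb p
  rw [rpow_neg ha.le, rpow_neg hb.le, rpow_neg ha.le, rpow_add_one ha.ne']
  have hAB : a ^ p < b ^ p := rpow_lt_rpow ha.le hab (by linarith)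
  rw [lt_div_iff₀ hB] at hbern
  have key : b * (b ^ p - a ^ p) < p * (b - a) * b ^ p := by
    field_simp at hbern; linarith
  rw [← sub_pos]
  field_simp
  nlinarith [mul_pos (sub_pos.mpr hab) (sub_pos.mpr hAB)]

lemma lt_rpow_neg_sub_rpow_neg {a b p : ℝ} (ha : 0 < a) (hab : a < b) (hp : 1 < p) :
    p * (b - a) * b ^ (-(p + 1)) < a ^ (-p) - b ^ (-p) := by
  have hb : 0 < b := ha.trans hab
  have hbern := one_add_mul_self_lt_rpow_one_add (s := (b - a) / a)
    (by rw [le_div_iff₀ ha]; linarith) (div_ne_zero (by linarith) ha.ne') hp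
  rw [show 1 + (b - a) / a = b / a by field_simp; ring, div_rpow hb.le ha.le] at hbern
  have hA := rpow_pos_of_pos ha p
  have hB := rpow_pos_of_pos hb p
  rw [rpow_neg ha.le, rpow_neg hb.le, rpow_neg hb.le, rpow_add_one hb.ne']
  have hAB : a ^ p < b ^ p := rpow_lt_rpow ha.le hab (by linarith)
  rw [lt_div_iff₀ hA] at hbern
  have key : p * (b - a) * a ^ p < a * (b ^ p - a ^ p) := by
    field_simp at hbern; linarith
  rw [← sub_pos]
  field_simp
  nlinarith [mul_pos (sub_pos.mpr hab) (sub_pos.mpr hAB)]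

lemma sum_Icc_sub_succ (f : ℤ → ℝ) {n m : ℤ} (hnm : n ≤ m) :
    ∑ k ∈ Finset.Icc n m, (f k - f (k + 1)) = f n - f (m + 1) := by
  induction m, hnm using Int.leInduction with
  | base => simp
  | succ m hnm ih =>
    rw [← Finset.insert_Icc_right_eq_Icc_add_one (by omega), Finset.sum_insert (by simp), ih]
    ring

lemma fracCoeff_succ {α : ℝ} (hα : ∀ j : ℤ, α / 2 ≠ j) (k : ℤ) :
    fracCoeff α (k + 1) = fracCoeff α k * ((2 * k - α) / (α + 2 * k + 2)) := by
  have hΓ : ∀ j : ℤ, Gamma (α / 2 + j) ≠ 0 := fun j =>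
    Gamma_ne_zero fun m h => hα (-m - j) (by push_cast; linarith)
  have h₁ : α / 2 - k ≠ 0 := fun h => hα k (by linarith)
  have h₂ : α / 2 + k + 1 ≠ 0 := fun h => hα (-k - 1) (by push_cast; linarith)
  have hΓ₁ : Gamma (α / 2 - k) ≠ 0 := by simpa [sub_eq_add_neg] using hΓ (-k)
  have hΓ₂ : Gamma (α / 2 + k + 1) ≠ 0 := by simpa [add_assoc] using hΓ (k + 1)
  unfold fracCoeff
  rw [Int.cast_add, Int.cast_one, show α / 2 - (k + 1 : ℝ) + 1 = α / 2 - k by ring,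
    show α / 2 + (k + 1 : ℝ) + 1 = α / 2 + k + 1 + 1 by ring, Gamma_add_one h₁, Gamma_add_one h₂,
    zpow_add_one₀ (by norm_num : (-1 : ℝ) ≠ 0)]
  have h₃ : α + 2 * k + 2 ≠ 0 := fun h => h₂ (by linarith)
  have h₄ : α - 2 * k ≠ 0 := fun h => h₁ (by linarith)
  field_simp
  ring

lemma fracCoeff_two (α : ℝ) : fracCoeff α 2 = -Scoeff α := by
  unfold fracCoeff Scoeff
  norm_num
  ring_nf

lemma Scoeff_pos {α : ℝ} (h0 : 0 < α) (h2 : α < 2) : 0 < Scoeff α := by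
  have hneg : Gamma (α / 2 - 1) < 0 := by
    have h := Gamma_add_one (s := α / 2 - 1) (by linarith)
    rw [sub_add_cancel] at h
    have := Gamma_pos_of_pos (by linarith : 0 < α / 2)
    nlinarith
  exact div_pos_of_neg_of_neg (neg_neg_of_pos (Gamma_pos_of_pos (by linarith)))
    (mul_neg_of_neg_of_pos hneg (Gamma_pos_of_pos (by linarith)))

section Bounds
variable {α : ℝ} (h0 : 0 < α) (h2 : α < 2)
include h0 h2

lemma half_ne_intCast : ∀ j : ℤ, α / 2 ≠ j := by
  intro j h
  have hlo : (0 : ℝ) < j := by linarith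
  have hhi : (j : ℝ) < 1 := by linarith
  norm_cast at hlo hhi
  omega

lemma neg_fracCoeff_succ (k : ℤ) :
    -fracCoeff α (k + 1) = -fracCoeff α k * (1 - (2 * α + 2) / (α + 2 * k + 2)) := by
  have hx : α + 2 * k + 2 ≠ 0 := fun h => half_ne_intCast h0 h2 (-k - 1) (by push_cast; linarith)
  rw [fracCoeff_succ (half_ne_intCast h0 h2) k]
  field_simp
  ring

lemma neg_fracCoeff_le {k : ℤ} (hk : 2 ≤ k) :
    -fracCoeff α k ≤ Scoeff α * ((α + 6) / (α + 2 * k + 2)) ^ (α + 1) := by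
  induction k, hk using Int.leInduction with
  | base =>
    rw [fracCoeff_two, neg_neg, Int.cast_ofNat, show α + 2 * 2 + 2 = α + 6 by ring,
      div_self (by linarith), one_rpow, mul_one]
  | succ k hk ih =>
    have hk' : (2 : ℝ) ≤ k := by exact_mod_cast hk
    have hS := Scoeff_pos h0 h2
    have hratio := one_sub_div_le_rpow (by linarith : 0 < α + 2 * k + 2)
      (by linarith : 0 ≤ 2 * α + 2) two_pos
    rw [show (2 * α + 2) / 2 = α + 1 by ring] at hratio
    calc -fracCoeff α (k + 1)
        = -fracCoeff α k * (1 - (2 * α + 2) / (α + 2 * k + 2)) := neg_fracCoeff_succ h0 h2 k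
      _ ≤ Scoeff α * ((α + 6) / (α + 2 * k + 2)) ^ (α + 1)
            * ((α + 2 * k + 2) / (α + 2 * k + 2 + 2)) ^ (α + 1) := by
        gcongr ?_ * ?_
        rw [sub_nonneg, div_le_one (by linarith)]; linarith
      _ = Scoeff α * ((α + 6) / (α + 2 * ↑(k + 1) + 2)) ^ (α + 1) := by
        rw [mul_assoc, ← mul_rpow (by positivity) (by positivity)]
        congr 2
        push_cast
        field_simp
        ring

lemma le_neg_fracCoeff {k : ℤ} (hk : 2 ≤ k) :
    Scoeff α * ((α + 4) / (α + 2 * k)) ^ (2 * α + 2) ≤ -fracCoeff α k := by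
  induction k, hk using Int.leInduction with
  | base =>
    rw [fracCoeff_two, neg_neg, Int.cast_ofNat, show α + 2 * 2 = α + 4 by ring,
      div_self (by linarith), one_rpow, mul_one]
  | succ k hk ih =>
    have hk' : (2 : ℝ) ≤ k := by exact_mod_cast hk
    have hS := Scoeff_pos h0 h2
    have hratio := rpow_le_one_sub_div (by linarith : 0 < α + 2 * k)
      (by linarith : 0 ≤ 2 * α + 2) (by linarith)
    calc Scoeff α * ((α + 4) / (α + 2 * ↑(k + 1))) ^ (2 * α + 2)
      _ = Scoeff α * ((α + 4) / (α + 2 * k)) ^ (2 * α + 2)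
            * ((α + 2 * k) / (α + 2 * k + 2)) ^ (2 * α + 2) := by
        rw [mul_assoc, ← mul_rpow (by positivity) (by positivity)]
        congr 2
        push_cast
        field_simp
        ring
      _ ≤ -fracCoeff α k * (1 - (2 * α + 2) / (α + 2 * k + 2)) := by
        gcongr ?_ * ?_
        exact le_trans (by positivity) ih
      _ = -fracCoeff α (k + 1) := (neg_fracCoeff_succ h0 h2 k).symm

end Bounds

section Terms
variable {α : ℝ} (h1 : 1 < α) (h2 : α < 2)
include h1 h2

lemma abs_fracCoeff_lt {k : ℤ} (hk : 2 ≤ k) :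
    |fracCoeff α k| < Scoeff α * (α + 6) ^ (α + 1) / (2 * α)
      * ((α + 2 * k) ^ (-α) - (α + 2 * k + 2) ^ (-α)) := by
  have hk' : (2 : ℝ) ≤ k := by exact_mod_cast hk
  have hx : 0 < α + 2 * k + 2 := by linarith
  have hS := Scoeff_pos (by linarith) h2
  have hneg : fracCoeff α k < 0 := by
    have := le_neg_fracCoeff (α := α) (by linarith) h2 hk
    have : 0 < Scoeff α * ((α + 4) / (α + 2 * k)) ^ (2 * α + 2) := by positivity
    linarith
  have hdiff := lt_rpow_neg_sub_rpow_neg (by linarith : 0 < α + 2 * k)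
    (by linarith : α + 2 * k < α + 2 * k + 2) h1
  rw [abs_of_neg hneg]
  calc -fracCoeff α k
    _ ≤ Scoeff α * ((α + 6) / (α + 2 * k + 2)) ^ (α + 1) := neg_fracCoeff_le (by linarith) h2 hk
    _ = Scoeff α * (α + 6) ^ (α + 1) / (2 * α)
          * (α * (α + 2 * k + 2 - (α + 2 * k)) * (α + 2 * k + 2) ^ (-(α + 1))) := by
      rw [div_rpow (by linarith) hx.le, rpow_neg hx.le]
      field_simp
      ring
    _ < _ := by gcongr

lemma lt_abs_fracCoeff {k : ℤ} (hk : 2 ≤ k) :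
    Scoeff α * (α + 4) ^ (2 * (α + 1)) / (2 * (2 * α + 1))
      * ((α + 2 * k) ^ (-(2 * α + 1)) - (α + 2 * k + 2) ^ (-(2 * α + 1))) < |fracCoeff α k| := by
  have hk' : (2 : ℝ) ≤ k := by exact_mod_cast hk
  have hx : 0 < α + 2 * k := by linarith
  have hS := Scoeff_pos (by linarith) h2
  have hdiff := rpow_neg_sub_rpow_neg_lt hx (by linarith : α + 2 * k < α + 2 * k + 2)
    (by linarith : 1 < 2 * α + 1)
  have hlow := le_neg_fracCoeff (α := α) (by linarith) h2 hk
  have hpos : 0 < Scoeff α * ((α + 4) / (α + 2 * k)) ^ (2 * α + 2) := by positivity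
  rw [abs_of_neg (by linarith)]
  calc _
    _ < Scoeff α * (α + 4) ^ (2 * (α + 1)) / (2 * (2 * α + 1))
          * ((2 * α + 1) * (α + 2 * k + 2 - (α + 2 * k)) * (α + 2 * k) ^ (-(2 * α + 1 + 1))) := by
      gcongr
    _ = Scoeff α * ((α + 4) / (α + 2 * k)) ^ (2 * α + 2) := by
      rw [div_rpow (by linarith) hx.le, rpow_neg hx.le]
      field_simp
      ring_nf
    _ ≤ -fracCoeff α k := hlow

end Terms

theorem fracCoeff_finite_sum_bound (α : ℝ) (hα1 : 1 < α) (hα2 : α < 2)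
    (n m : ℤ) (hn : 3 ≤ n) (hnm : n ≤ m) :
    Scoeff α * ((α + 2 * (n : ℝ)) ^ (-(2 * α + 1)) - (α + 2 * (m : ℝ) + 2) ^ (-(2 * α + 1)))
        * (α + 4) ^ (2 * (α + 1)) / (2 * (2 * α + 1))
      < ∑ k ∈ Finset.Icc n m, |fracCoeff α k| ∧
    ∑ k ∈ Finset.Icc n m, |fracCoeff α k|
      < Scoeff α * ((α + 2 * (n : ℝ)) ^ (-α) - (α + 2 * (m : ℝ) + 2) ^ (-α))
        * (α + 6) ^ (α + 1) / (2 * α) := by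
  have hk : ∀ k ∈ Finset.Icc n m, 2 ≤ k := fun k hk => by linarith [(Finset.mem_Icc.mp hk).1]
  have hne : (Finset.Icc n m).Nonempty := Finset.nonempty_Icc.mpr hnm
  have hsucc (k : ℤ) : α + 2 * ((k + 1 : ℤ) : ℝ) = α + 2 * k + 2 := by push_cast; ring
  constructor
  · set f : ℤ → ℝ := fun k => (α + 2 * (k : ℝ)) ^ (-(2 * α + 1))
    calc _
      _ = ∑ k ∈ Finset.Icc n m,
          Scoeff α * (α + 4) ^ (2 * (α + 1)) / (2 * (2 * α + 1)) * (f k - f (k + 1)) := by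
        rw [← Finset.mul_sum, sum_Icc_sub_succ f hnm]
        simp only [f, hsucc]
        ring
      _ < _ := Finset.sum_lt_sum_of_nonempty hne fun k hk' => by
        simpa only [f, hsucc] using lt_abs_fracCoeff hα1 hα2 (hk k hk')
  · set f : ℤ → ℝ := fun k => (α + 2 * (k : ℝ)) ^ (-α)
    calc _
      _ < ∑ k ∈ Finset.Icc n m, Scoeff α * (α + 6) ^ (α + 1) / (2 * α) * (f k - f (k + 1)) :=
        Finset.sum_lt_sum_of_nonempty hne fun k hk' => by
          simpa only [f, hsucc] using abs_fracCoeff_lt hα1 hα2 (hk k hk')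
      _ = _ := by
        rw [← Finset.mul_sum, sum_Icc_sub_succ f hnm]
        simp only [f, hsucc]
        ring
end

section
/- For every real α with 1 < α < 2, the two-sided infinite sum of absolute values of the fractional centred difference coefficients over all nonzero integers k satisfies 2^{1+α}/((1+α)·π) ≤ Σ_{k∈ℤ, k≠0} |g_k^{(α)}| ≤ 2^{1+α}/π. -/
/-!
For `0 < α < 2` the Gamma recursion gives `(α + 2n + 2) g_{n+1} = (2n - α) g_n`. With the weight
`w_n = (α - 2n) g_n` this reads `w_n - w_{n+1} = -2α g_{n+1}` and `w_{n+1} = w_n (2n+2-α)/(2n+2+α)`,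
so `w` is positive and decreasing, `g_{n+1} ≤ 0`, and for `α ≥ 1` even `(n + 1) w_n ≤ w_0`.
The tail therefore telescopes: `∑_{n ≥ 1} |g_n| = w_0 / (2α) = g_0 / 2`, and by the symmetry
`g_{-k} = g_k` the two-sided sum is `g_0 = Γ(α+1) / Γ(α/2+1)²`. Legendre's duplication formula
turns this into `2^α Γ((α+1)/2) / (√π Γ(α/2+1))`, and the log-convexity bound
`√π/2 · Γ(x) ≤ Γ(x + 1/2)` (`x ≥ 1`), used at `x = (α+1)/2` and at `x = α/2 + 1`, squeezes it
between `2^α / (1 + α)` and `2^{1+α} / π`.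
-/

open Real

open Filter Topology

theorem ConvexOn.sub_le_sub_of_le {s : Set ℝ} {f : ℝ → ℝ} (hf : ConvexOn ℝ s f) {a b h : ℝ}
    (ha : a ∈ s) (hbh : b + h ∈ s) (hab : a ≤ b) (hh : 0 < h) :
    f (a + h) - f a ≤ f (b + h) - f b := by
  have hsub : Set.Icc a (b + h) ⊆ s := hf.1.ordConnected.out ha hbh
  have hb : b ∈ s := hsub ⟨hab, by linarith⟩
  have hah : a + h ∈ s := hsub ⟨by linarith, by linarith⟩
  have h₁ : slope f a (a + h) ≤ slope f a (b + h) :=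
    hf.slope_mono ha ⟨hah, (by linarith : a < a + h).ne'⟩ ⟨hbh, (by linarith : a < b + h).ne'⟩
      (by linarith)
  have h₂ : slope f (b + h) a ≤ slope f (b + h) b :=
    hf.slope_mono hbh ⟨ha, (by linarith : a < b + h).ne⟩ ⟨hb, (by linarith : b < b + h).ne⟩ hab
  rw [slope_comm f (b + h), slope_comm f (b + h)] at h₂
  have := h₁.trans h₂
  rwa [slope_def_field, slope_def_field, add_sub_cancel_left, add_sub_cancel_left,
    div_le_div_iff_of_pos_right hh] at this

theorem hasSum_sub_succ_of_antitone {f : ℕ → ℝ} {l : ℝ} (hf : Antitone f)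
    (hl : Tendsto f atTop (𝓝 l)) : HasSum (fun n ↦ f n - f (n + 1)) (f 0 - l) := by
  rw [hasSum_iff_tendsto_nat_of_nonneg fun n ↦ sub_nonneg.2 (hf n.le_succ)]
  simp only [Finset.sum_range_sub']
  exact tendsto_const_nhds.sub hl

theorem HasSum.subtype_ne_zero_of_add_one_of_neg_add_one {M : Type*} [AddCommMonoid M]
    [TopologicalSpace M] [ContinuousAdd M] {f : ℤ → M} {a b : M}
    (ha : HasSum (fun n : ℕ ↦ f (n + 1)) a) (hb : HasSum (fun n : ℕ ↦ f (-(n + 1))) b) :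
    HasSum (fun k : {k : ℤ // k ≠ 0} ↦ f k) (a + b) := by
  have hmem (n : ℕ) : (n + 1 : ℤ) ∈ {k : ℤ | k ≠ 0} ∧ (-(n + 1) : ℤ) ∈ {k : ℤ | k ≠ 0} :=
    ⟨show (n + 1 : ℤ) ≠ 0 by omega, show -(n + 1 : ℤ) ≠ 0 by omega⟩
  have h := HasSum.of_add_one_of_neg_add_one (f := {k : ℤ | k ≠ 0}.indicator f)
    (ha.congr_fun fun n ↦ Set.indicator_of_mem (hmem n).1 f)
    (hb.congr_fun fun n ↦ Set.indicator_of_mem (hmem n).2 f)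
  rw [Set.indicator_of_notMem (by simp), add_zero] at h
  exact hasSum_subtype_iff_indicator.2 h

namespace Real

theorem Gamma_add_mul_Gamma_le_Gamma_mul_Gamma_add {a b h : ℝ} (ha : 0 < a) (hab : a ≤ b)
    (hh : 0 ≤ h) : Gamma (a + h) * Gamma b ≤ Gamma a * Gamma (b + h) := by
  rcases hh.eq_or_lt with rfl | hh
  · simp
  have hlog := convexOn_log_Gamma.sub_le_sub_of_le ha (Set.mem_Ioi.2 (by linarith : 0 < b + h))
    hab hh
  simp only [Function.comp_apply] at hlog
  have := Gamma_pos_of_pos ha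
  have := Gamma_pos_of_pos (by linarith : 0 < b)
  have := Gamma_pos_of_pos (by linarith : 0 < a + h)
  have := Gamma_pos_of_pos (by linarith : 0 < b + h)
  rw [← log_le_log_iff (by positivity) (by positivity), log_mul (by positivity) (by positivity),
    log_mul (by positivity) (by positivity)]
  linarith

theorem sqrt_pi_div_two_mul_Gamma_le_Gamma_add_half {x : ℝ} (hx : 1 ≤ x) :
    √π / 2 * Gamma x ≤ Gamma (x + 1 / 2) := by
  have h := Gamma_add_mul_Gamma_le_Gamma_mul_Gamma_add one_pos hx (by norm_num : (0 : ℝ) ≤ 1 / 2)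
  rwa [add_comm, Gamma_add_one (by norm_num), Gamma_one_half_eq, Gamma_one, one_mul,
    div_mul_eq_mul_div, one_mul] at h

-- Legendre's duplication formula at `s = (α + 1) / 2`.
theorem Gamma_add_one_eq_two_rpow_mul (α : ℝ) :
    Gamma (α + 1) = 2 ^ α / √π * (Gamma ((α + 1) / 2) * Gamma (α / 2 + 1)) := by
  have h := Gamma_mul_Gamma_add_half ((α + 1) / 2)
  rw [show (α + 1) / 2 + 1 / 2 = α / 2 + 1 by ring, show 2 * ((α + 1) / 2) = α + 1 by ring,
    show 1 - (α + 1) = -α by ring, rpow_neg zero_le_two] at h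
  have : 0 < √π := sqrt_pos.2 pi_pos
  have : (0 : ℝ) < 2 ^ α := rpow_pos_of_pos two_pos α
  rw [h]
  field_simp

end Real

theorem fracCoeff_neg (α : ℝ) (k : ℤ) : fracCoeff α (-k) = fracCoeff α k := by
  simp only [fracCoeff, zpow_neg, ← inv_zpow, inv_neg, inv_one, Int.cast_neg]
  ring_nf

theorem fracCoeff_zero (α : ℝ) : fracCoeff α 0 = Gamma (α + 1) / Gamma (α / 2 + 1) ^ 2 := by
  simp [fracCoeff, sq]

theorem add_two_mul_fracCoeff_add_one {α : ℝ} {k : ℤ} (h₁ : α - 2 * k ≠ 0)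
    (h₂ : α + 2 * k + 2 ≠ 0) :
    (α + 2 * k + 2) * fracCoeff α (k + 1) = (2 * k - α) * fracCoeff α k := by
  have e₁ : Gamma (α / 2 - (k + 1 : ℤ) + 1) = Gamma (α / 2 - k) := by push_cast; ring_nf
  have e₂ : Gamma (α / 2 + (k + 1 : ℤ) + 1) = (α / 2 + k + 1) * Gamma (α / 2 + k + 1) := by
    rw [← Gamma_add_one (by contrapose! h₂; linarith)]; push_cast; ring_nf
  rw [fracCoeff, fracCoeff, e₁, e₂, Gamma_add_one (s := α / 2 - k) (by contrapose! h₁; linarith),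
    zpow_add_one₀ (by norm_num)]
  generalize Gamma (α / 2 - k) = A
  generalize Gamma (α / 2 + k + 1) = B
  -- `A` or `B` vanishes only at a pole of `Γ`, where both sides are `0` since `x / 0 = 0`.
  by_cases hA : A = 0
  · simp [hA]
  by_cases hB : B = 0
  · simp [hB]
  field_simp
  ring

theorem fracCoeff_zero_eq {α : ℝ} (hα : -2 < α) :
    fracCoeff α 0 = 2 ^ α / √π * (Gamma ((α + 1) / 2) / Gamma (α / 2 + 1)) := by
  have : 0 < Gamma (α / 2 + 1) := Gamma_pos_of_pos (by linarith)
  rw [fracCoeff_zero, Gamma_add_one_eq_two_rpow_mul]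
  field_simp

theorem two_rpow_div_one_add_le_fracCoeff_zero {α : ℝ} (hα : 0 ≤ α) :
    2 ^ α / (1 + α) ≤ fracCoeff α 0 := by
  have hΓ := sqrt_pi_div_two_mul_Gamma_le_Gamma_add_half (x := α / 2 + 1) (by linarith)
  rw [show α / 2 + 1 + 1 / 2 = (α + 1) / 2 + 1 by ring,
    Gamma_add_one (by positivity : (α + 1) / 2 ≠ 0)] at hΓ
  have : 0 < √π := sqrt_pos.2 pi_pos
  have : 0 < Gamma (α / 2 + 1) := Gamma_pos_of_pos (by positivity)
  calc 2 ^ α / (1 + α) = 2 ^ α / √π * (√π / (1 + α)) := by field_simp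
    _ ≤ 2 ^ α / √π * (Gamma ((α + 1) / 2) / Gamma (α / 2 + 1)) := by
      refine mul_le_mul_of_nonneg_left ?_ (by positivity)
      rw [div_le_div_iff₀ (by positivity) (by positivity)]
      linarith
    _ = fracCoeff α 0 := (fracCoeff_zero_eq (by linarith)).symm

theorem fracCoeff_zero_le_two_rpow_div_pi {α : ℝ} (hα : 1 ≤ α) :
    fracCoeff α 0 ≤ 2 ^ (1 + α) / π := by
  have hΓ := sqrt_pi_div_two_mul_Gamma_le_Gamma_add_half (x := (α + 1) / 2) (by linarith)
  rw [show (α + 1) / 2 + 1 / 2 = α / 2 + 1 by ring] at hΓ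
  have : 0 < √π := sqrt_pos.2 pi_pos
  have : 0 < Gamma (α / 2 + 1) := Gamma_pos_of_pos (by positivity)
  calc fracCoeff α 0 = 2 ^ α / √π * (Gamma ((α + 1) / 2) / Gamma (α / 2 + 1)) :=
        fracCoeff_zero_eq (by linarith)
    _ ≤ 2 ^ α / √π * (2 / √π) := by
      refine mul_le_mul_of_nonneg_left ?_ (by positivity)
      rw [div_le_div_iff₀ (by positivity) (by positivity)]
      linarith
    _ = 2 ^ (1 + α) / π := by
      rw [rpow_add two_pos, rpow_one, div_mul_div_comm, mul_self_sqrt pi_pos.le, mul_comm]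

noncomputable def fracCoeffWeight (α : ℝ) (n : ℕ) : ℝ := (α - 2 * n) * fracCoeff α n

section Weight

variable {α : ℝ}

theorem fracCoeffWeight_zero : fracCoeffWeight α 0 = α * fracCoeff α 0 := by
  simp [fracCoeffWeight]

theorem add_two_mul_fracCoeff_nat_add_one (hα₀ : 0 < α) (hα₂ : α < 2) (n : ℕ) :
    (α + 2 * n + 2) * fracCoeff α (n + 1) = (2 * n - α) * fracCoeff α n := by
  have hn : (0 : ℝ) ≤ n := n.cast_nonneg
  refine add_two_mul_fracCoeff_add_one ?_ (by push_cast; linarith)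
  rcases n.eq_zero_or_pos with rfl | hpos
  · simpa using hα₀.ne'
  · have : (1 : ℝ) ≤ n := by exact_mod_cast hpos
    push_cast; linarith

theorem fracCoeffWeight_sub_succ (hα₀ : 0 < α) (hα₂ : α < 2) (n : ℕ) :
    fracCoeffWeight α n - fracCoeffWeight α (n + 1) = -(2 * α * fracCoeff α (n + 1)) := by
  simp only [fracCoeffWeight]
  push_cast
  linear_combination add_two_mul_fracCoeff_nat_add_one hα₀ hα₂ n

theorem mul_fracCoeffWeight_succ (hα₀ : 0 < α) (hα₂ : α < 2) (n : ℕ) :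
    (2 * n + 2 + α) * fracCoeffWeight α (n + 1) = (2 * n + 2 - α) * fracCoeffWeight α n := by
  simp only [fracCoeffWeight]
  push_cast
  linear_combination (α - 2 * n - 2) * add_two_mul_fracCoeff_nat_add_one hα₀ hα₂ n

theorem fracCoeffWeight_pos (hα₀ : 0 < α) (hα₂ : α < 2) (n : ℕ) : 0 < fracCoeffWeight α n := by
  induction n with
  | zero =>
    rw [fracCoeffWeight_zero, fracCoeff_zero]
    have := Gamma_pos_of_pos (by linarith : 0 < α + 1)
    have := Gamma_pos_of_pos (by linarith : 0 < α / 2 + 1)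
    positivity
  | succ n ih =>
    have hn : (0 : ℝ) ≤ n := n.cast_nonneg
    refine pos_of_mul_pos_right (a := 2 * n + 2 + α) ?_ (by linarith)
    rw [mul_fracCoeffWeight_succ hα₀ hα₂]
    exact mul_pos (by linarith) ih

theorem fracCoeffWeight_antitone (hα₀ : 0 < α) (hα₂ : α < 2) : Antitone (fracCoeffWeight α) := by
  refine antitone_nat_of_succ_le fun n ↦ ?_
  have hn : (0 : ℝ) ≤ n := n.cast_nonneg
  have h := mul_fracCoeffWeight_succ hα₀ hα₂ n
  have := fracCoeffWeight_pos hα₀ hα₂ n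
  nlinarith

theorem fracCoeff_succ_nonpos (hα₀ : 0 < α) (hα₂ : α < 2) (n : ℕ) :
    fracCoeff α (n + 1) ≤ 0 := by
  have h := fracCoeffWeight_sub_succ hα₀ hα₂ n
  have := sub_nonneg.2 (fracCoeffWeight_antitone hα₀ hα₂ n.le_succ)
  nlinarith

theorem nat_add_one_mul_fracCoeffWeight_le (hα₁ : 1 ≤ α) (hα₂ : α < 2) (n : ℕ) :
    (n + 1) * fracCoeffWeight α n ≤ fracCoeffWeight α 0 := by
  induction n with
  | zero => simp
  | succ n ih =>
    have hn : (0 : ℝ) ≤ n := n.cast_nonneg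
    have hw := fracCoeffWeight_pos (by linarith) hα₂ n
    have hcoef : (n + 2) * (2 * n + 2 - α) ≤ (n + 1) * (2 * n + 2 + α) := by
      nlinarith [mul_nonneg hn (sub_nonneg.2 hα₁)]
    have key : (n + 2) * fracCoeffWeight α (n + 1) ≤ (n + 1) * fracCoeffWeight α n := by
      refine le_of_mul_le_mul_left ?_ (by linarith : (0 : ℝ) < 2 * n + 2 + α)
      calc (2 * n + 2 + α) * ((n + 2) * fracCoeffWeight α (n + 1))
          = (n + 2) * ((2 * n + 2 + α) * fracCoeffWeight α (n + 1)) := by ring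
        _ = (n + 2) * (2 * n + 2 - α) * fracCoeffWeight α n := by
          rw [mul_fracCoeffWeight_succ (by linarith) hα₂]; ring
        _ ≤ (n + 1) * (2 * n + 2 + α) * fracCoeffWeight α n := by gcongr
        _ = (2 * n + 2 + α) * ((n + 1) * fracCoeffWeight α n) := by ring
    push_cast
    linarith

theorem tendsto_fracCoeffWeight (hα₁ : 1 ≤ α) (hα₂ : α < 2) :
    Tendsto (fracCoeffWeight α) atTop (𝓝 0) := by
  refine squeeze_zero (fun n ↦ (fracCoeffWeight_pos (by linarith) hα₂ n).le) (fun n ↦ ?_)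
    (by simpa using tendsto_one_div_add_atTop_nhds_zero_nat.const_mul (fracCoeffWeight α 0))
  rw [← div_eq_mul_inv, le_div_iff₀ (by positivity), mul_comm]
  exact nat_add_one_mul_fracCoeffWeight_le hα₁ hα₂ n

theorem hasSum_abs_fracCoeff_nat_add_one (hα₁ : 1 ≤ α) (hα₂ : α < 2) :
    HasSum (fun n : ℕ ↦ |fracCoeff α (n + 1)|) (fracCoeff α 0 / 2) := by
  have hα₀ : 0 < α := by linarith
  have h := (hasSum_sub_succ_of_antitone (fracCoeffWeight_antitone hα₀ hα₂)
    (tendsto_fracCoeffWeight hα₁ hα₂)).div_const (2 * α)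
  rw [fracCoeffWeight_zero, sub_zero, show α * fracCoeff α 0 / (2 * α) = fracCoeff α 0 / 2 by
    field_simp] at h
  refine h.congr_fun fun n ↦ ?_
  rw [abs_of_nonpos (fracCoeff_succ_nonpos hα₀ hα₂ n), fracCoeffWeight_sub_succ hα₀ hα₂]
  field_simp

end Weight

theorem hasSum_abs_fracCoeff_ne_zero {α : ℝ} (hα₁ : 1 ≤ α) (hα₂ : α < 2) :
    HasSum (fun k : {k : ℤ // k ≠ 0} ↦ |fracCoeff α k|) (fracCoeff α 0) := by
  have h := hasSum_abs_fracCoeff_nat_add_one hα₁ hα₂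
  have := HasSum.subtype_ne_zero_of_add_one_of_neg_add_one (f := fun k ↦ |fracCoeff α k|) h
    (h.congr_fun fun n ↦ by rw [fracCoeff_neg])
  rwa [add_halves] at this

theorem fracCoeff_two_sided_infinite_sum_bound (α : ℝ) (hα1 : 1 < α) (hα2 : α < 2) :
    2 ^ (1 + α) / ((1 + α) * π) ≤ ∑' k : {k : ℤ // k ≠ 0}, |fracCoeff α k| ∧
    ∑' k : {k : ℤ // k ≠ 0}, |fracCoeff α k| ≤ 2 ^ (1 + α) / π := by
  rw [(hasSum_abs_fracCoeff_ne_zero hα1.le hα2).tsum_eq]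
  refine ⟨le_trans ?_ (two_rpow_div_one_add_le_fracCoeff_zero (by linarith)),
    fracCoeff_zero_le_two_rpow_div_pi hα1.le⟩
  calc 2 ^ (1 + α) / ((1 + α) * π) = 2 ^ α / (1 + α) * (2 / π) := by
        rw [rpow_add two_pos, rpow_one, div_mul_div_comm, mul_comm (2 ^ α)]
    _ ≤ 2 ^ α / (1 + α) :=
        mul_le_of_le_one_right (by positivity) (div_le_one_of_le₀ two_le_pi pi_pos.le)
end

section
/- Let 1 < α < 2 and let N ≥ 1 be an integer. Define the N×N real symmetric Toeplitz matrix A_α by (A_α)_{ij} = g_{i−j}^{(α)}. Then A_α is positive definite: for every nonzero v ∈ ℝ^N one has vᵀ A_α v > 0; moreover every eigenvalue λ of A_α satisfies 0 < λ < g_0^{(α)} + 2^{1+α}/π. -/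
/-!
The coefficients satisfy `g_{k+1} (α/2 + k + 1) = g_k (k - α/2)`. For `0 < α < 2` this recurrence
shows that `g_0 > 0` and `g_k < 0` for `k ≠ 0`, and it telescopes to
`∑_{|m| ≤ n} g_m = -((α + 2n + 2) / α) g_{n+1} > 0`. Every row of `A_α` therefore has
`∑_{j ≠ i} |g_{i-j}| < g_0`, so by Gershgorin's theorem every eigenvalue lies in `(0, 2 g_0)`, and a
symmetric matrix with positive spectrum is positive definite. Finally
`g_0 = Γ(α+1) / Γ(α/2+1)² ≤ 2^{1+α} / π` for `1 < α < 2` by Legendre's duplication formula and the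
log-convexity inequality `Γ(α/2 + 1/2) Γ(3/2) ≤ Γ(1) Γ(α/2 + 1)`.
-/

open Real Matrix

/-- The symmetric Toeplitz matrix `(A_α)_{ij} = g_{i−j}^{(α)}`. -/
noncomputable def fracToeplitz (α : ℝ) (N : ℕ) : Matrix (Fin N) (Fin N) ℝ :=
  fun i j => fracCoeff α ((i : ℤ) - (j : ℤ))

open Finset

theorem ConvexOn.map_add_map_le {𝕜 : Type*} [Field 𝕜] [LinearOrder 𝕜] [IsStrictOrderedRing 𝕜]
    {s : Set 𝕜} {f : 𝕜 → 𝕜} (hf : ConvexOn 𝕜 s f) {a b x y : 𝕜} (ha : a ∈ s) (hb : b ∈ s)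
    (hx : x ∈ Set.Ioo a b) (hy : y ∈ Set.Ioo a b) (hxy : x + y = a + b) :
    f x + f y ≤ f a + f b := by
  have hfx := hf.secant_mono_aux1 ha hb hx.1 hx.2
  have hfy := hf.secant_mono_aux1 ha hb hy.1 hy.2
  refine le_of_mul_le_mul_left ?_ (sub_pos.2 (hx.1.trans hx.2))
  linear_combination hfx + hfy + (f b - f a) * hxy

theorem Real.Gamma_mul_Gamma_le {a b x y : ℝ} (ha : 0 < a) (hx : x ∈ Set.Ioo a b)
    (hy : y ∈ Set.Ioo a b) (hxy : x + y = a + b) :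
    Gamma x * Gamma y ≤ Gamma a * Gamma b := by
  have hx₀ := ha.trans hx.1
  have hy₀ := ha.trans hy.1
  have hb₀ := hx₀.trans hx.2
  have hlog := convexOn_log_Gamma.map_add_map_le ha hb₀ hx hy hxy
  simp only [Function.comp_apply] at hlog
  rwa [← log_mul (Gamma_pos_of_pos hx₀).ne' (Gamma_pos_of_pos hy₀).ne',
    ← log_mul (Gamma_pos_of_pos ha).ne' (Gamma_pos_of_pos hb₀).ne',
    log_le_log_iff (mul_pos (Gamma_pos_of_pos hx₀) (Gamma_pos_of_pos hy₀))
      (mul_pos (Gamma_pos_of_pos ha) (Gamma_pos_of_pos hb₀))] at hlog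

theorem Function.Even.sum_Icc_neg {M : Type*} [AddCommMonoid M] {f : ℤ → M} (hf : f.Even) (n : ℕ) :
    ∑ m ∈ Icc (-(n : ℤ)) n, f m = f 0 + 2 • ∑ k ∈ range n, f (k + 1) := by
  induction n with
  | zero => simp
  | succ n ih =>
    have hIcc : Icc (-((n + 1 : ℕ) : ℤ)) (n + 1 : ℕ) =
        insert (-(n + 1 : ℤ)) (insert (n + 1 : ℤ) (Icc (-(n : ℤ)) n)) := by
      ext m; simp only [mem_insert, mem_Icc]; push_cast; omega
    rw [hIcc, sum_insert (by simp; omega), sum_insert (by simp), ih, sum_range_succ, hf]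
    abel

theorem sum_erase_abs_le_of_nonpos {f : ℤ → ℝ} (hf : ∀ m ≠ 0, f m ≤ 0) {N : ℕ} (i : Fin N) :
    ∑ j ∈ univ.erase i, |f (i - j)| ≤ f 0 - ∑ m ∈ Icc (-(N : ℤ)) N, f m := by
  have hinj : Set.InjOn (fun j : Fin N => (i : ℤ) - j) (univ.erase i) :=
    fun j _ k _ h => Fin.ext (by simp only at h; omega)
  have hsub : (univ.erase i).image (fun j : Fin N => (i : ℤ) - j) ⊆ (Icc (-(N : ℤ)) N).erase 0 := by
    intro m hm
    obtain ⟨j, hj, rfl⟩ := mem_image.1 hm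
    have := Fin.val_ne_of_ne (ne_of_mem_erase hj)
    simp only [mem_erase, mem_Icc]
    omega
  calc ∑ j ∈ univ.erase i, |f (i - j)|
      = ∑ m ∈ (univ.erase i).image (fun j : Fin N => (i : ℤ) - j), -f m := by
        rw [sum_image hinj]
        refine sum_congr rfl fun j hj => abs_of_nonpos (hf _ ?_)
        have := Fin.val_ne_of_ne (ne_of_mem_erase hj)
        omega
    _ ≤ ∑ m ∈ (Icc (-(N : ℤ)) N).erase 0, -f m :=
        sum_le_sum_of_subset_of_nonneg hsub fun m hm _ => neg_nonneg.2 (hf m (ne_of_mem_erase hm))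
    _ = f 0 - ∑ m ∈ Icc (-(N : ℤ)) N, f m := by
        rw [sum_neg_distrib, sum_erase_eq_sub (by simp)]
        ring

theorem Matrix.IsHermitian.posDef_of_hasEigenvalue_pos {n : Type*} [Fintype n] [DecidableEq n]
    {A : Matrix n n ℝ} (hA : A.IsHermitian)
    (h : ∀ μ, Module.End.HasEigenvalue (toLin' A) μ → 0 < μ) : A.PosDef :=
  hA.posDef_iff_eigenvalues_pos.2 fun i => h _ <| Module.End.hasEigenvalue_iff_mem_spectrum.2 <| by
    rw [spectrum_toLin']
    exact hA.eigenvalues_mem_spectrum_real i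

section FracCoeff

variable {α : ℝ}

theorem fracCoeff_even : (fracCoeff α).Even := by
  intro k
  rw [fracCoeff, fracCoeff, _root_.zpow_neg, ← _root_.inv_zpow, inv_neg, inv_one, Int.cast_neg,
    sub_neg_eq_add, ← sub_eq_add_neg, mul_comm (Gamma _)]

theorem fracCoeff_zero_pos (hα : -1 < α) : 0 < fracCoeff α 0 := by
  have := Gamma_pos_of_pos (show 0 < α / 2 + 1 by linarith)
  have := Gamma_pos_of_pos (show 0 < α + 1 by linarith)
  simp only [fracCoeff, zpow_zero, Int.cast_zero, sub_zero, add_zero, one_mul]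
  positivity

theorem fracCoeff_add_one_mul (k : ℤ) (hk₁ : α / 2 + k + 1 ≠ 0) (hk₂ : α / 2 - k ≠ 0) :
    fracCoeff α (k + 1) * (α / 2 + k + 1) = fracCoeff α k * (k - α / 2) := by
  have h₁ : Gamma (α / 2 + k + 1 + 1) = (α / 2 + k + 1) * Gamma (α / 2 + k + 1) :=
    Gamma_add_one hk₁
  have h₂ : Gamma (α / 2 - k + 1) = (α / 2 - k) * Gamma (α / 2 - k) := Gamma_add_one hk₂
  simp only [fracCoeff, zpow_add_one₀ (show (-1 : ℝ) ≠ 0 by norm_num), Int.cast_add,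
    Int.cast_one, h₂, show α / 2 - (k + 1) + 1 = α / 2 - k by ring,
    show α / 2 + (k + 1) + 1 = α / 2 + k + 1 + 1 by ring, h₁]
  rw [show (k : ℝ) - α / 2 = -(α / 2 - k) by ring]
  -- the Gamma values may vanish, so only the two linear factors are cancelled
  generalize Gamma (α / 2 - k) = A, Gamma (α / 2 + k + 1) = B at *
  generalize α / 2 + k + 1 = x, α / 2 - k = y at *
  simp only [div_eq_mul_inv, mul_inv]
  linear_combination (-(-1) ^ k * Gamma (α + 1) * A⁻¹ * B⁻¹) * inv_mul_cancel₀ hk₁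
    + ((-1) ^ k * Gamma (α + 1) * A⁻¹ * B⁻¹) * inv_mul_cancel₀ hk₂

theorem fracCoeff_natCast_add_one_mul (h₀ : 0 < α) (h₂ : α < 2) (k : ℕ) :
    fracCoeff α (k + 1) * (α / 2 + k + 1) = fracCoeff α k * (k - α / 2) := by
  have hk : α / 2 - k ≠ 0 := by
    rcases k with _ | k
    · simpa using h₀.ne'
    · push_cast
      exact (show α / 2 - (k + 1) < 0 by linarith).ne
  exact_mod_cast fracCoeff_add_one_mul (k : ℤ) (by push_cast; positivity) (by exact_mod_cast hk)

theorem fracCoeff_natCast_add_one_neg (h₀ : 0 < α) (h₂ : α < 2) (k : ℕ) :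
    fracCoeff α (k + 1) < 0 := by
  induction k with
  | zero =>
    have h := fracCoeff_natCast_add_one_mul h₀ h₂ 0
    have := fracCoeff_zero_pos (by linarith : -1 < α)
    push_cast at h ⊢
    nlinarith
  | succ k ih =>
    have h := fracCoeff_natCast_add_one_mul h₀ h₂ (k + 1)
    push_cast at h ⊢
    nlinarith

theorem fracCoeff_neg_of_ne_zero (h₀ : 0 < α) (h₂ : α < 2) {m : ℤ} (hm : m ≠ 0) :
    fracCoeff α m < 0 := by
  obtain ⟨k, rfl | rfl⟩ := m.eq_nat_or_neg
  all_goals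
    obtain ⟨k, rfl⟩ := Nat.exists_eq_add_one_of_ne_zero (by omega : k ≠ 0)
    simpa only [fracCoeff_even _, Nat.cast_add_one] using fracCoeff_natCast_add_one_neg h₀ h₂ k

theorem sum_Icc_fracCoeff (h₀ : 0 < α) (h₂ : α < 2) (n : ℕ) :
    ∑ m ∈ Icc (-(n : ℤ)) n, fracCoeff α m = -((α + 2 * n + 2) / α) * fracCoeff α (n + 1) := by
  rw [fracCoeff_even.sum_Icc_neg, nsmul_eq_mul]
  induction n with
  | zero =>
    have h := fracCoeff_natCast_add_one_mul h₀ h₂ 0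
    push_cast at h ⊢
    field_simp
    linear_combination 2 * h
  | succ n ih =>
    have h := fracCoeff_natCast_add_one_mul h₀ h₂ (n + 1)
    rw [sum_range_succ, mul_add, ← add_assoc, ih]
    field_simp
    push_cast at h ⊢
    linear_combination 2 * h

theorem sum_Icc_fracCoeff_pos (h₀ : 0 < α) (h₂ : α < 2) (n : ℕ) :
    0 < ∑ m ∈ Icc (-(n : ℤ)) n, fracCoeff α m := by
  rw [sum_Icc_fracCoeff h₀ h₂]
  have := fracCoeff_natCast_add_one_neg h₀ h₂ n
  have : 0 < (α + 2 * n + 2) / α := by positivity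
  nlinarith

theorem fracCoeff_zero_le (h₁ : 1 < α) (h₂ : α < 2) : fracCoeff α 0 ≤ 2 ^ (1 + α) / π := by
  have hG : 0 < Gamma (α / 2 + 1) := Gamma_pos_of_pos (by linarith)
  have hdup := Gamma_mul_Gamma_add_half (α / 2 + 1 / 2)
  rw [show α / 2 + 1 / 2 + 1 / 2 = α / 2 + 1 by ring, show 2 * (α / 2 + 1 / 2) = α + 1 by ring,
    show 1 - (α + 1) = -α by ring] at hdup
  have hconv := Gamma_mul_Gamma_le one_pos (x := α / 2 + 1 / 2) (y := 3 / 2) (b := α / 2 + 1)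
    ⟨by linarith, by linarith⟩ ⟨by linarith, by linarith⟩ (by ring)
  have hΓ32 : Gamma (3 / 2) = √π / 2 := by
    rw [show (3 / 2 : ℝ) = 1 / 2 + 1 by norm_num, Gamma_add_one (by norm_num), Gamma_one_half_eq]
    ring
  rw [Gamma_one, one_mul, hΓ32] at hconv
  have h2 : (2 : ℝ) ^ (-α) * 2 ^ α = 1 := by rw [← rpow_add two_pos]; simp
  have hπ : √π * √π = π := mul_self_sqrt pi_pos.le
  have hfc : fracCoeff α 0 = Gamma (α + 1) / (Gamma (α / 2 + 1) * Gamma (α / 2 + 1)) := by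
    simp [fracCoeff]
  rw [hfc, div_le_div_iff₀ (by positivity) pi_pos]
  calc Gamma (α + 1) * π = Gamma (α / 2 + 1 / 2) * √π * (Gamma (α / 2 + 1) * 2 ^ α) := by
        linear_combination (-(√π * 2 ^ α)) * hdup - Gamma (α + 1) * hπ
          - Gamma (α + 1) * (√π * √π) * h2
    _ ≤ 2 * Gamma (α / 2 + 1) * (Gamma (α / 2 + 1) * 2 ^ α) :=
        mul_le_mul_of_nonneg_right (by linarith) (by positivity)
    _ = 2 ^ (1 + α) * (Gamma (α / 2 + 1) * Gamma (α / 2 + 1)) := by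
        rw [rpow_add two_pos, rpow_one]; ring

end FracCoeff

section FracToeplitz

variable {α : ℝ} {N : ℕ}

theorem fracToeplitz_isHermitian : (fracToeplitz α N).IsHermitian := by
  ext i j
  simp only [conjTranspose_apply, star_trivial, fracToeplitz]
  rw [← fracCoeff_even, neg_sub]

theorem fracToeplitz_eigenvalue_mem_Ioo (h₀ : 0 < α) (h₂ : α < 2) {μ : ℝ}
    (hμ : Module.End.HasEigenvalue (toLin' (fracToeplitz α N)) μ) :
    μ ∈ Set.Ioo 0 (2 * fracCoeff α 0) := by
  obtain ⟨i, hi⟩ := eigenvalue_mem_ball hμ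
  have hrow := sum_erase_abs_le_of_nonpos (fun m hm => (fracCoeff_neg_of_ne_zero h₀ h₂ hm).le) i
  have hsum := sum_Icc_fracCoeff_pos h₀ h₂ N
  rw [Metric.mem_closedBall, Real.dist_eq] at hi
  simp only [fracToeplitz, sub_self, Real.norm_eq_abs] at hi
  constructor <;> linarith [abs_le.1 (hi.trans hrow)]

theorem fracToeplitz_posDef (h₀ : 0 < α) (h₂ : α < 2) : (fracToeplitz α N).PosDef :=
  fracToeplitz_isHermitian.posDef_of_hasEigenvalue_pos fun _ hμ =>
    (fracToeplitz_eigenvalue_mem_Ioo h₀ h₂ hμ).1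

end FracToeplitz

theorem fracToeplitz_posDef_and_eigenvalue_bound_general (α : ℝ) (hα1 : 1 < α) (hα2 : α < 2)
    (N : ℕ) :
    (∀ v : Fin N → ℝ, v ≠ 0 → 0 < v ⬝ᵥ (fracToeplitz α N).mulVec v) ∧
    (∀ lam : ℝ, Module.End.HasEigenvalue (Matrix.toLin' (fracToeplitz α N)) lam →
      0 < lam ∧ lam < fracCoeff α 0 + 2 ^ (1 + α) / π) := by
  have hα0 : 0 < α := by linarith
  refine ⟨fun v hv => (fracToeplitz_posDef hα0 hα2).dotProduct_mulVec_pos hv, fun lam hlam => ?_⟩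
  obtain ⟨hpos, hlt⟩ := fracToeplitz_eigenvalue_mem_Ioo hα0 hα2 hlam
  exact ⟨hpos, by linarith [fracCoeff_zero_le hα1 hα2]⟩

theorem fracToeplitz_posDef_and_eigenvalue_bound (α : ℝ) (hα1 : 1 < α) (hα2 : α < 2)
    (N : ℕ) (hN : 1 ≤ N) :
    (∀ v : Fin N → ℝ, v ≠ 0 → 0 < v ⬝ᵥ (fracToeplitz α N).mulVec v) ∧
    (∀ lam : ℝ, Module.End.HasEigenvalue (Matrix.toLin' (fracToeplitz α N)) lam →
      0 < lam ∧ lam < fracCoeff α 0 + 2 ^ (1 + α) / π) :=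
  fracToeplitz_posDef_and_eigenvalue_bound_general α hα1 hα2 N
end
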